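/- Let G be a graph in which every connected component has an even number of odd-degree vertices, and suppose we select in each component either two distinguished odd-degree vertices (if the component has odd-degree vertices) or one distinguished vertex (otherwise). Then adding a cycle of new edges through the distinguished pairs across components, together with matchings pairing up the remaining odd-degree vertices within each component, yields a connected multigraph with all degrees even in which every vertex is incident to at most two added edges. -/

import Mathlib

/-- A multigraph on `V`: `m u v` is the number of parallel edges between `u`
and `v`. -/
structure Multigraph (V : Type*) where
  m : V → V → ℕ
  symm : ∀ u v, m u v = m v u
  loopless : ∀ v, m v v = 0

namespace Multigraph

variable {V : Type*}

/-- The underlying simple graph of a multigraph. -/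
def toSimple (H : Multigraph V) : SimpleGraph V where
  Adj u v := 0 < H.m u v
  symm := ⟨fun u v h => by simpa only [] using (H.symm u v ▸ h)⟩
  loopless := ⟨fun v h => by simp only [H.loopless v] at h; exact absurd h (lt_irrefl 0)⟩

/-- The degree of a vertex, counting parallel edges with multiplicity. -/
def degree [Fintype V] (H : Multigraph V) (v : V) : ℕ := ∑ w, H.m v w

/-- Union (edge-multiplicity sum) of two multigraphs. -/
def add (H K : Multigraph V) : Multigraph V where
  m u v := H.m u v + K.m u v
  symm := fun u v => by (try simp only []); rw [H.symm, K.symm]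
  loopless := fun v => by (try simp only []); rw [H.loopless, K.loopless]

end Multigraph

/-!
Order the components cyclically by a permutation `σ` and pick in each component `c` vertices
`vm c`, `vp c`: two distinct odd-degree vertices if `c` has any, one vertex otherwise. Add the cycle edges `vp c — vm (σ c)` and a perfect matching of the
remaining odd-degree vertices, of which there are evenly many because each component has an
even number of odd-degree vertices. Every odd vertex then gets exactly one new edge, and an even
vertex none, or two if it represents a component without odd vertices; the cycle links all
components. A cycle edge can only be a loop when there is a single component and it has no odd
vertices; then `H` itself is already connected with all degrees even.
-/

open Finset

theorem Sym2.sum_ite_mk_eq_ite_mem {V : Type*} [Fintype V] [DecidableEq V] {e : Sym2 V}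
    (he : ¬e.IsDiag) (v : V) :
    ∑ w, (if v = w then 0 else if s(v, w) = e then 1 else 0) = if v ∈ e then 1 else 0 := by
  split_ifs with hv
  · obtain ⟨x, rfl⟩ := Sym2.mem_iff_exists.mp hv
    have hvx : v ≠ x := fun h => he (h ▸ Sym2.mk_isDiag_iff.mpr rfl)
    rw [sum_eq_single x
      (fun w _ hw => by simp only [Sym2.congr_right, hw, if_false, ite_self]) (by simp)]
    simp [hvx]
  · refine sum_eq_zero fun w _ => ?_
    split_ifs with h h' <;> first | rfl | exact absurd (h' ▸ Sym2.mem_mk_left v w) hv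

theorem Finset.exists_perfect_matching {V : Type*} [DecidableEq V] (s : Finset V) (hs : Even #s) :
    ∃ M : Finset (Sym2 V), (∀ e ∈ M, ¬e.IsDiag) ∧
      ∀ v, #{e ∈ M | v ∈ e} = if v ∈ s then 1 else 0 := by
  induction s using Finset.strongInduction with
  | H s ih =>
  rcases s.eq_empty_or_nonempty with rfl | hne
  · exact ⟨∅, by simp, by simp⟩
  have h2 : 1 < #s := by
    have := hne.card_pos
    rcases hs with ⟨k, hk⟩
    omega
  obtain ⟨a, ha, b, hb, hab⟩ := one_lt_card.mp h2
  set t := (s.erase a).erase b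
  have hts : t ⊂ s := (erase_ssubset (mem_erase.mpr ⟨hab.symm, hb⟩)).trans (erase_ssubset ha)
  have hcard : #t + 2 = #s := by
    rw [card_erase_of_mem (mem_erase.mpr ⟨hab.symm, hb⟩), card_erase_of_mem ha]
    omega
  obtain ⟨M, hMdiag, hMdeg⟩ := ih t hts (by rw [← hcard] at hs; simpa [parity_simps] using hs)
  have hnew : s(a, b) ∉ M := fun h => by
    have := hMdeg a
    simp only [t, mem_erase, ne_eq, not_true_eq_false, and_false, false_and, if_false,
      card_eq_zero, filter_eq_empty_iff] at this
    exact this h (Sym2.mem_mk_left a b)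
  refine ⟨insert s(a, b) M, ?_, fun v => ?_⟩
  · simpa [forall_and, hab] using hMdiag
  · rw [filter_insert]
    by_cases hv : v = a ∨ v = b
    · rcases hv with rfl | rfl <;> simp_all [t]
    · simp only [not_or] at hv
      simp_all [t]

lemma Finset.card_filter_apply_eq_of_leftInverse {ι V : Type*} [Fintype ι] [DecidableEq V]
    {a : ι → V} {r : V → ι} (har : ∀ i, r (a i) = i) (v : V) :
    #{i | a i = v} = if a (r v) = v then 1 else 0 := by
  split_ifs with h
  · refine card_eq_one.mpr ⟨r v, ?_⟩
    ext i
    simp only [mem_filter, mem_univ, true_and, mem_singleton]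
    exact ⟨fun hi => hi ▸ (har i).symm, fun hi => hi ▸ h⟩
  · exact card_eq_zero.mpr (filter_eq_empty_iff.mpr fun i _ hi => h (by rw [← hi, har]))

lemma Multiset.card_filter_mem_map_cycle {ι V : Type*} [Fintype ι] [DecidableEq V]
    (σ : Equiv.Perm ι) {a b : ι → V} (hab : ∀ i, a i ≠ b (σ i)) (v : V) :
    ((Finset.univ.val.map fun i => s(a i, b (σ i))).filter (v ∈ ·)).card =
      #{i | a i = v} + #{i | b i = v} := by
  rw [Multiset.filter_map, Multiset.card_map, ← Finset.filter_val, Finset.card_val,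
    card_filter, card_filter, card_filter,
    ← Equiv.sum_comp σ (fun i => if b i = v then 1 else 0),
    ← sum_add_distrib]
  refine sum_congr rfl fun i _ => ?_
  simp only [Function.comp_apply, Sym2.mem_iff]
  have := hab i
  split_ifs <;> grind

open Fin.NatCast in
theorem Equiv.Perm.exists_forall_exists_pow_apply_eq (α : Type*) [Fintype α] :
    ∃ σ : Equiv.Perm α, ∀ a b, ∃ k : ℕ, (σ ^ k) a = b := by
  obtain ⟨n, ⟨e⟩⟩ : ∃ n, Nonempty (α ≃ Fin n) := ⟨_, ⟨Fintype.equivFin α⟩⟩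
  cases n with
  | zero => exact ⟨1, fun a => (e a).elim0⟩
  | succ n =>
  refine ⟨e.trans ((finRotate _).trans e.symm), fun a b => ⟨(e b - e a).val, ?_⟩⟩
  have hpow : ∀ k : ℕ,
      ((e.trans ((finRotate _).trans e.symm)) ^ k) a = e.symm (e a + (k : Fin (n + 1))) := by
    intro k
    induction k with
    | zero => simp
    | succ k ih => rw [pow_succ', Perm.mul_apply, ih]; simp [finRotate_apply, add_assoc]
  rw [hpow, Fin.cast_val_eq_self, add_sub_cancel, Equiv.symm_apply_apply]

theorem SimpleGraph.connected_of_le_of_reachable_perm {V : Type*} [Nonempty V]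
    {G G' : SimpleGraph V} (hle : G ≤ G') (σ : Equiv.Perm G.ConnectedComponent)
    (hσ : ∀ c d, ∃ k : ℕ, (σ ^ k) c = d)
    (hreach : ∀ c, ∃ u w, G.connectedComponentMk u = c ∧ G.connectedComponentMk w = σ c ∧
      G'.Reachable u w) :
    G'.Connected := by
  have hpow : ∀ (k : ℕ) (u w : V),
      G.connectedComponentMk w = (σ ^ k) (G.connectedComponentMk u) → G'.Reachable u w := by
    intro k
    induction k with
    | zero => exact fun u w h => (ConnectedComponent.eq.mp h.symm).mono hle
    | succ k ih =>
      intro u w h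
      obtain ⟨x, y, hx, hy, hxy⟩ := hreach (G.connectedComponentMk u)
      have hux : G'.Reachable u x := (ConnectedComponent.eq.mp hx.symm).mono hle
      exact hux.trans (hxy.trans (ih y w (by rw [h, hy, pow_succ, Equiv.Perm.mul_apply])))
  refine ⟨fun u w => ?_⟩
  obtain ⟨k, hk⟩ := hσ (G.connectedComponentMk u) (G.connectedComponentMk w)
  exact hpow k u w hk.symm

namespace Multigraph

variable {V : Type*}

instance : Zero (Multigraph V) := ⟨⟨fun _ _ => 0, fun _ _ => rfl, fun _ => rfl⟩⟩

@[simp] lemma zero_m (u v : V) : (0 : Multigraph V).m u v = 0 := rfl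

@[simp] lemma add_zero (H : Multigraph V) : H.add 0 = H := rfl

lemma degree_add [Fintype V] (H K : Multigraph V) (v : V) :
    (H.add K).degree v = H.degree v + K.degree v :=
  sum_add_distrib

lemma toSimple_le_toSimple_add (H K : Multigraph V) : H.toSimple ≤ (H.add K).toSimple :=
  fun _ _ (h : 0 < H.m _ _) => Nat.lt_add_right _ h

section OfMultiset

variable [DecidableEq V]

def ofMultiset (E : Multiset (Sym2 V)) : Multigraph V where
  m u v := if u = v then 0 else E.count s(u, v)
  symm u v := by simp only [eq_comm, Sym2.eq_swap]
  loopless _ := if_pos rfl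

lemma ofMultiset_m_pos {E : Multiset (Sym2 V)} {u v : V} :
    0 < (ofMultiset E).m u v ↔ u ≠ v ∧ s(u, v) ∈ E := by
  simp only [ofMultiset]
  split_ifs with h <;> simp [h, Multiset.count_pos]

lemma degree_ofMultiset [Fintype V] {E : Multiset (Sym2 V)} (hE : ∀ e ∈ E, ¬e.IsDiag) (v : V) :
    (ofMultiset E).degree v = (E.filter (v ∈ ·)).card := by
  induction E using Multiset.induction_on with
  | empty => simp [degree, ofMultiset]
  | cons e E ih =>
    have he := hE e (Multiset.mem_cons_self e E)
    have hsplit : (ofMultiset (e ::ₘ E)).degree v =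
        (ofMultiset E).degree v + ∑ w, (if v = w then 0 else if s(v, w) = e then 1 else 0) := by
      rw [degree, degree, ← sum_add_distrib]
      refine sum_congr rfl fun w _ => ?_
      simp only [ofMultiset, Multiset.count_cons]
      split_ifs <;> rfl
    rw [hsplit, ih fun e' he' => hE e' (Multiset.mem_cons_of_mem he'),
      Sym2.sum_ite_mk_eq_ite_mem he, Multiset.filter_cons, Multiset.card_add]
    split_ifs <;> simp [add_comm]

end OfMultiset

section Augmentation

variable [Fintype V] {H : Multigraph V}

/-- The paper's `v_c⁻ = vm c` and `v_c⁺ = vp c`: two distinct odd-degree vertices of the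
component `c` if it has any, a single vertex of `c` otherwise. -/
structure Representatives (H : Multigraph V) where
  vm : H.toSimple.ConnectedComponent → V
  vp : H.toSimple.ConnectedComponent → V
  mk_vm c : H.toSimple.connectedComponentMk (vm c) = c
  mk_vp c : H.toSimple.connectedComponentMk (vp c) = c
  odd_of_ne c : vm c ≠ vp c → Odd (H.degree (vm c)) ∧ Odd (H.degree (vp c))
  even_of_eq c : vm c = vp c → ∀ v, H.toSimple.connectedComponentMk v = c → Even (H.degree v)

namespace Representatives

lemma nonempty_of_even
    (hodd : ∀ c : H.toSimple.ConnectedComponent,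
      Even (Nat.card {v : V // H.toSimple.connectedComponentMk v = c ∧ Odd (H.degree v)})) :
    Nonempty H.Representatives := by
  classical
  have hrep : ∀ c : H.toSimple.ConnectedComponent, ∃ a b : V,
      H.toSimple.connectedComponentMk a = c ∧ H.toSimple.connectedComponentMk b = c ∧
      (a ≠ b → Odd (H.degree a) ∧ Odd (H.degree b)) ∧
      (a = b → ∀ v, H.toSimple.connectedComponentMk v = c → Even (H.degree v)) := by
    intro c
    by_cases h : ∃ v, H.toSimple.connectedComponentMk v = c ∧ Odd (H.degree v)
    · obtain ⟨v, hv⟩ := h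
      set O : Finset V := {v | H.toSimple.connectedComponentMk v = c ∧ Odd (H.degree v)}
      have hcard : Even #O := by
        simpa only [Nat.card_eq_fintype_card, Fintype.card_subtype] using hodd c
      have hpos : 0 < #O := card_pos.mpr ⟨v, by simpa [O] using hv⟩
      obtain ⟨a, ha, b, hb, hab⟩ :=
        (one_lt_card (s := O)).mp (by rcases hcard with ⟨k, hk⟩; omega)
      simp only [O, mem_filter, mem_univ, true_and] at ha hb
      exact ⟨a, b, ha.1, hb.1, fun _ => ⟨ha.2, hb.2⟩, fun h => absurd h hab⟩
    · obtain ⟨w, hw⟩ := c.exists_rep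
      push Not at h
      exact ⟨w, w, hw, hw, fun h => absurd rfl h,
        fun _ v hv => Nat.not_odd_iff_even.mp (h v hv)⟩
  choose vm vp mk_vm mk_vp odd_of_ne even_of_eq using hrep
  exact ⟨⟨vm, vp, mk_vm, mk_vp, odd_of_ne, even_of_eq⟩⟩

variable (r : H.Representatives)

def unmatched [DecidableEq V] : Finset V :=
  {v | Odd (H.degree v) ∧ v ≠ r.vm (H.toSimple.connectedComponentMk v) ∧
    v ≠ r.vp (H.toSimple.connectedComponentMk v)}

lemma even_card_unmatched [DecidableEq V] [Fintype H.toSimple.ConnectedComponent]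
    (hodd : ∀ c : H.toSimple.ConnectedComponent,
      Even (Nat.card {v : V // H.toSimple.connectedComponentMk v = c ∧ Odd (H.degree v)})) :
    Even #r.unmatched := by
  classical
  rw [card_eq_sum_card_fiberwise (f := H.toSimple.connectedComponentMk) (t := univ)
    (fun _ _ => mem_coe.mpr (mem_univ _))]
  refine even_sum _ fun c _ => ?_
  set O : Finset V := {v | H.toSimple.connectedComponentMk v = c ∧ Odd (H.degree v)}
  have hfiber : ({v ∈ r.unmatched | H.toSimple.connectedComponentMk v = c} : Finset V) =
      O \ {r.vm c, r.vp c} := by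
    ext v
    simp only [unmatched, O, mem_filter, mem_univ, true_and, mem_sdiff, mem_insert,
      mem_singleton]
    constructor
    · rintro ⟨⟨hv, hm, hp⟩, rfl⟩
      exact ⟨⟨rfl, hv⟩, by tauto⟩
    · rintro ⟨⟨rfl, hv⟩, hne⟩
      exact ⟨⟨hv, by tauto⟩, rfl⟩
  rw [hfiber]
  by_cases hmp : r.vm c = r.vp c
  · suffices O = ∅ by simp [this]
    refine eq_empty_of_forall_notMem fun v hv => ?_
    simp only [O, mem_filter, mem_univ, true_and] at hv
    exact Nat.not_even_iff_odd.mpr hv.2 (r.even_of_eq c hmp v hv.1)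
  · have hsub : {r.vm c, r.vp c} ⊆ O := by
      intro v hv
      simp only [mem_insert, mem_singleton] at hv
      simp only [O, mem_filter, mem_univ, true_and]
      rcases hv with rfl | rfl
      · exact ⟨r.mk_vm c, (r.odd_of_ne c hmp).1⟩
      · exact ⟨r.mk_vp c, (r.odd_of_ne c hmp).2⟩
    rw [card_sdiff_of_subset hsub, card_pair hmp]
    exact (by simpa only [Nat.card_eq_fintype_card, Fintype.card_subtype] using hodd c :
      Even #O).tsub even_two

variable [Fintype H.toSimple.ConnectedComponent] (σ : Equiv.Perm H.toSimple.ConnectedComponent)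
  (M : Finset (Sym2 V))

def cycle : Multiset (Sym2 V) := univ.val.map fun c => s(r.vp c, r.vm (σ c))

def augmentation [DecidableEq V] : Multigraph V := ofMultiset (M.val + r.cycle σ)

variable {r σ M}

lemma mem_add_cycle {e : Sym2 V} :
    e ∈ M.val + r.cycle σ ↔ e ∈ M ∨ ∃ c, s(r.vp c, r.vm (σ c)) = e := by
  simp [cycle]

variable [DecidableEq V]

lemma degree_augmentation (hcycle : ∀ c, r.vp c ≠ r.vm (σ c))
    (hMdiag : ∀ e ∈ M, ¬e.IsDiag)
    (hMdeg : ∀ v, #{e ∈ M | v ∈ e} = if v ∈ r.unmatched then 1 else 0) (v : V) :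
    (r.augmentation σ M).degree v = (if v ∈ r.unmatched then 1 else 0) +
      ((if r.vp (H.toSimple.connectedComponentMk v) = v then 1 else 0) +
        if r.vm (H.toSimple.connectedComponentMk v) = v then 1 else 0) := by
  have hdiag : ∀ e ∈ M.val + r.cycle σ, ¬e.IsDiag := by
    simp only [mem_add_cycle]
    rintro e (he | ⟨c, rfl⟩)
    exacts [hMdiag e he, hcycle c]
  rw [augmentation, degree_ofMultiset hdiag, Multiset.filter_add, Multiset.card_add, ← hMdeg v,
    cycle, Multiset.card_filter_mem_map_cycle σ hcycle,
    card_filter_apply_eq_of_leftInverse r.mk_vp, card_filter_apply_eq_of_leftInverse r.mk_vm]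
  rfl

lemma degree_augmentation_le_two (hcycle : ∀ c, r.vp c ≠ r.vm (σ c))
    (hMdiag : ∀ e ∈ M, ¬e.IsDiag)
    (hMdeg : ∀ v, #{e ∈ M | v ∈ e} = if v ∈ r.unmatched then 1 else 0) (v : V) :
    (r.augmentation σ M).degree v ≤ 2 := by
  rw [degree_augmentation hcycle hMdiag hMdeg]
  split_ifs <;> simp_all [unmatched]

lemma even_degree_add_augmentation (hcycle : ∀ c, r.vp c ≠ r.vm (σ c))
    (hMdiag : ∀ e ∈ M, ¬e.IsDiag)
    (hMdeg : ∀ v, #{e ∈ M | v ∈ e} = if v ∈ r.unmatched then 1 else 0) (v : V) :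
    Even ((H.add (r.augmentation σ M)).degree v) := by
  rw [degree_add, degree_augmentation hcycle hMdiag hMdeg]
  have h1 := r.odd_of_ne (H.toSimple.connectedComponentMk v)
  have h2 := fun h => r.even_of_eq (H.toSimple.connectedComponentMk v) h v rfl
  simp only [unmatched, mem_filter, mem_univ, true_and]
  split_ifs <;> grind [Nat.even_add_one, Nat.not_even_iff_odd]

lemma odd_degree_of_augmentation_m_pos (hcycle : ∀ c, r.vp c ≠ r.vm (σ c))
    (hMdeg : ∀ v, #{e ∈ M | v ∈ e} = if v ∈ r.unmatched then 1 else 0) {u v : V}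
    (huv : 0 < (r.augmentation σ M).m u v)
    (hc : H.toSimple.connectedComponentMk u = H.toSimple.connectedComponentMk v) :
    Odd (H.degree u) ∧ Odd (H.degree v) := by
  obtain ⟨-, he | ⟨c, he⟩⟩ :=
    (ofMultiset_m_pos.trans (and_congr_right' mem_add_cycle)).mp huv
  · have hM : ∀ x ∈ s(u, v), Odd (H.degree x) := fun x hx => by
      by_contra hx'
      have := hMdeg x
      rw [if_neg (by simp [unmatched, hx']), card_eq_zero, filter_eq_empty_iff] at this
      exact this he hx
    exact ⟨hM u (Sym2.mem_mk_left u v), hM v (Sym2.mem_mk_right u v)⟩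
  · have hσc : σ c = c := by
      have : H.toSimple.connectedComponentMk (r.vp c) =
          H.toSimple.connectedComponentMk (r.vm (σ c)) := by
        rcases Sym2.eq_iff.mp he with ⟨rfl, rfl⟩ | ⟨rfl, rfl⟩
        exacts [hc, hc.symm]
      rw [r.mk_vp, r.mk_vm] at this
      exact this.symm
    rw [hσc] at he
    have hodd := r.odd_of_ne c (hσc ▸ hcycle c).symm
    rcases Sym2.eq_iff.mp he with ⟨rfl, rfl⟩ | ⟨rfl, rfl⟩
    exacts [hodd.symm, hodd]

lemma connected_add_augmentation [Nonempty V] (hσ : ∀ c d, ∃ k : ℕ, (σ ^ k) c = d)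
    (hcycle : ∀ c, r.vp c ≠ r.vm (σ c)) :
    (H.add (r.augmentation σ M)).toSimple.Connected := by
  refine SimpleGraph.connected_of_le_of_reachable_perm (toSimple_le_toSimple_add _ _) σ hσ
    fun c => ⟨r.vp c, r.vm (σ c), r.mk_vp c, r.mk_vm (σ c), SimpleGraph.Adj.reachable ?_⟩
  show 0 < H.m _ _ + _
  exact Nat.add_pos_right _
    (ofMultiset_m_pos.mpr ⟨hcycle c, mem_add_cycle.mpr (Or.inr ⟨c, rfl⟩)⟩)

end Representatives

end Augmentation

end Multigraph

/-- Construction of the auxiliary Eulerian multigraph: if every connected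
component of a finite multigraph `H` has an even number of odd-degree vertices,
then one can add edges — a cycle through representative vertices across the
components together with matchings pairing the remaining odd-degree vertices
inside each component — obtaining a connected multigraph with all degrees even
in which every vertex is incident to at most two added edges.  In particular
the added edges joining two vertices of the same component match odd-degree
vertices. -/
theorem stmt_19 {V : Type*} [Fintype V] [Nonempty V] (H : Multigraph V)
    (hodd : ∀ c : H.toSimple.ConnectedComponent,
      Even (Nat.card {v : V // H.toSimple.connectedComponentMk v = c ∧ Odd (H.degree v)})) :
    ∃ R : Multigraph V,
      (∀ v, R.degree v ≤ 2) ∧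
      (∀ u v, 0 < R.m u v →
        H.toSimple.connectedComponentMk u = H.toSimple.connectedComponentMk v →
        Odd (H.degree u) ∧ Odd (H.degree v)) ∧
      (H.add R).toSimple.Connected ∧
      (∀ v, Even ((H.add R).degree v)) := by
  classical
  let _ : Fintype H.toSimple.ConnectedComponent := Fintype.ofFinite _
  by_cases hEuler : H.toSimple.Connected ∧ ∀ v, Even (H.degree v)
  · refine ⟨0, fun v => by simp [Multigraph.degree], fun u v h => absurd h (lt_irrefl 0), ?_⟩
    rwa [Multigraph.add_zero]
  obtain ⟨σ, hσ⟩ := Equiv.Perm.exists_forall_exists_pow_apply_eq H.toSimple.ConnectedComponent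
  obtain ⟨r⟩ := Multigraph.Representatives.nonempty_of_even hodd
  have hcycle : ∀ c, r.vp c ≠ r.vm (σ c) := fun c hc => hEuler <| by
    have hσc : σ c = c := by rw [← r.mk_vm (σ c), ← hc, r.mk_vp]
    have hsingle : ∀ v, H.toSimple.connectedComponentMk v = c := fun v => by
      obtain ⟨k, hk⟩ := hσ c (H.toSimple.connectedComponentMk v)
      rw [← hk, Equiv.Perm.pow_apply_eq_self_of_apply_eq_self hσc]
    refine ⟨⟨fun u v => SimpleGraph.ConnectedComponent.eq.mp
      ((hsingle u).trans (hsingle v).symm)⟩, fun v => r.even_of_eq c ?_ v (hsingle v)⟩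
    rwa [hσc, eq_comm] at hc
  obtain ⟨M, hMdiag, hMdeg⟩ := Finset.exists_perfect_matching _ (r.even_card_unmatched hodd)
  exact ⟨r.augmentation σ M, r.degree_augmentation_le_two hcycle hMdiag hMdeg,
    fun u v => r.odd_degree_of_augmentation_m_pos hcycle hMdeg,
    r.connected_add_augmentation hσ hcycle, r.even_degree_add_augmentation hcycle hMdiag hMdeg⟩
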